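/- There exists x in the unit sphere of JH with inf_{α>0} diam S(B_{JH*}, x, α) = 0. In particular the unit ball of JH* has w*-slices of arbitrarily small diameter and JH* fails the w*-slice diameter two property. -/

import Mathlib

open Metric

def dLe (a b : ℕ × ℕ) : Prop := a.1 ≤ b.1 ∧ b.2 / 2 ^ (b.1 - a.1) = a.2

def IsPQSegD (S : Finset (ℕ × ℕ)) (p q : ℕ) : Prop :=
  (∀ t ∈ S, t.2 < 2 ^ t.1) ∧
  (∀ t ∈ S, p ≤ t.1 ∧ t.1 ≤ q) ∧
  (∀ k : ℕ, p ≤ k → k ≤ q → ∃! t, t ∈ S ∧ t.1 = k) ∧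
  (∀ s ∈ S, ∀ t ∈ S, dLe s t ∨ dLe t s)

def AdmissibleD (F : Finset (Finset (ℕ × ℕ))) : Prop :=
  ∃ p q : ℕ, p ≤ q ∧ (∀ S ∈ F, IsPQSegD S p q) ∧
    ∀ S ∈ F, ∀ S' ∈ F, S ≠ S' → Disjoint S S'

noncomputable def jhNorm (x : (ℕ × ℕ) →₀ ℝ) : ℝ :=
  sSup {r : ℝ | ∃ F : Finset (Finset (ℕ × ℕ)), AdmissibleD F ∧
    r = ∑ S ∈ F, |∑ t ∈ S, x t|}

/-!
The norm of `JH` is flat at the witness `x`: there is `δ > 0` with `‖x + u‖ + ‖x - u‖ ≤ 2`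
whenever `‖u‖ ≤ δ`. Testing a functional `f` of the slice `S(B_{JH*}, x, α)` on `x + u` and
another one `g` on `x - u` gives `(f - g) u < 2α`, so the slice has diameter at most `2α / δ`.

Flatness comes from the shape of admissible families. A family either meets the root, and then
it is a single segment starting at the root, along which `x` sums to `1` only for the segment
`{(0,0), (1,0)}` and to at most `7/8` in absolute value otherwise; or it avoids the root, and
then it collects at most `∑_{t ≠ root} |x t| = 3/4` from `x`. Hence
`‖x + z‖ ≤ max (1 + z(0,0) + z(1,0)) (7/8 + ‖z‖)`, which is the affine function
`1 + z(0,0) + z(1,0)` of `z` once `‖z‖ ≤ 1/16`.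
-/

section WeakStarSlice

variable {X : Type*} [NormedAddCommGroup X] [NormedSpace ℝ X]

def weakStarSlice (x : X) (α : ℝ) : Set (X →L[ℝ] ℝ) :=
  {f | ‖f‖ ≤ 1 ∧ f x > 1 - α}

lemma norm_add_add_norm_sub_le_two_of_dense {x : X} {D : Set X} (hD : Dense D) {δ : ℝ}
    (hδ : 0 < δ) (hflat : ∀ u ∈ D, ‖u‖ < δ → ‖x + u‖ + ‖x - u‖ ≤ 2) :
    ∀ u ∈ closedBall (0 : X) δ, ‖x + u‖ + ‖x - u‖ ≤ 2 := by
  have hclosed : IsClosed {u : X | ‖x + u‖ + ‖x - u‖ ≤ 2} :=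
    isClosed_le (by fun_prop) continuous_const
  have hball : ball (0 : X) δ ∩ D ⊆ {u | ‖x + u‖ + ‖x - u‖ ≤ 2} :=
    fun u ⟨hu, huD⟩ => hflat u huD (mem_ball_zero_iff.1 hu)
  rw [← closure_ball _ hδ.ne']
  exact closure_minimal (hD.open_subset_closure_inter isOpen_ball) isClosed_closure |>.trans
    (hclosed.closure_subset_iff.2 hball)

lemma apply_le_norm_of_norm_le_one {f : X →L[ℝ] ℝ} (hf : ‖f‖ ≤ 1) (y : X) : f y ≤ ‖y‖ :=
  calc f y ≤ ‖f y‖ := le_abs_self _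
    _ ≤ 1 * ‖y‖ := f.le_of_opNorm_le hf y
    _ = ‖y‖ := one_mul _

lemma apply_sub_apply_lt_of_mem_weakStarSlice {x u : X} (hu : ‖x + u‖ + ‖x - u‖ ≤ 2) {α : ℝ}
    {f g : X →L[ℝ] ℝ} (hf : f ∈ weakStarSlice x α) (hg : g ∈ weakStarSlice x α) :
    f u - g u < 2 * α := by
  have hfu := apply_le_norm_of_norm_le_one hf.1 (x + u)
  have hgu := apply_le_norm_of_norm_le_one hg.1 (x - u)
  rw [map_add] at hfu
  rw [map_sub] at hgu
  linarith [hf.2, hg.2]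

lemma norm_sub_le_of_mem_weakStarSlice {x : X} {δ : ℝ} (hδ : 0 < δ)
    (hflat : ∀ u ∈ closedBall (0 : X) δ, ‖x + u‖ + ‖x - u‖ ≤ 2) {α : ℝ} (hα : 0 ≤ α)
    {f g : X →L[ℝ] ℝ} (hf : f ∈ weakStarSlice x α) (hg : g ∈ weakStarSlice x α) :
    ‖f - g‖ ≤ 2 * α / δ := by
  refine ContinuousLinearMap.opNorm_le_of_unit_norm (by positivity) fun w hw => ?_
  have hδw : δ • w ∈ closedBall (0 : X) δ := by
    rw [mem_closedBall_zero_iff, norm_smul, hw, Real.norm_of_nonneg hδ.le, mul_one]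
  have hfg := apply_sub_apply_lt_of_mem_weakStarSlice (hflat _ hδw) hf hg
  have hgf := apply_sub_apply_lt_of_mem_weakStarSlice (hflat _ hδw) hg hf
  simp only [map_smul, smul_eq_mul] at hfg hgf
  rw [le_div_iff₀ hδ, ← abs_of_pos hδ, Real.norm_eq_abs, ← abs_mul, abs_le]
  constructor <;> simp only [FunLike.coe_sub, Pi.sub_apply] <;> linarith

lemma diam_weakStarSlice_le {x : X} {δ : ℝ} (hδ : 0 < δ)
    (hflat : ∀ u ∈ closedBall (0 : X) δ, ‖x + u‖ + ‖x - u‖ ≤ 2) {α : ℝ} (hα : 0 ≤ α) :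
    diam (weakStarSlice x α) ≤ 2 * α / δ :=
  diam_le_of_forall_dist_le (by positivity) fun f hf g hg => by
    rw [dist_eq_norm]
    exact norm_sub_le_of_mem_weakStarSlice hδ hflat hα hf hg

lemma sInf_diam_weakStarSlice_eq_zero {x : X} {δ : ℝ} (hδ : 0 < δ)
    (hflat : ∀ u ∈ closedBall (0 : X) δ, ‖x + u‖ + ‖x - u‖ ≤ 2) :
    sInf {d : ℝ | ∃ α : ℝ, 0 < α ∧ d = diam (weakStarSlice x α)} = 0 := by
  have hnonneg : ∀ d ∈ {d : ℝ | ∃ α : ℝ, 0 < α ∧ d = diam (weakStarSlice x α)}, 0 ≤ d := by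
    rintro d ⟨α, -, rfl⟩
    exact diam_nonneg
  refine le_antisymm (le_of_forall_pos_le_add fun ε hε => ?_) (Real.sInf_nonneg hnonneg)
  calc sInf _ ≤ diam (weakStarSlice x (δ * ε / 2)) :=
        csInf_le ⟨0, hnonneg⟩ ⟨δ * ε / 2, by positivity, rfl⟩
    _ ≤ 2 * (δ * ε / 2) / δ := diam_weakStarSlice_le hδ hflat (by positivity)
    _ = 0 + ε := by field_simp; ring

end WeakStarSlice

open Finset

namespace IsPQSegD

variable {S : Finset (ℕ × ℕ)} {p q : ℕ}

lemma exists_mem_fst_eq (hS : IsPQSegD S p q) {k : ℕ} (hpk : p ≤ k) (hkq : k ≤ q) :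
    ∃ t ∈ S, t.1 = k :=
  let ⟨t, ⟨ht, htk⟩, _⟩ := hS.2.2.1 k hpk hkq
  ⟨t, ht, htk⟩

lemma eq_of_fst_eq (hS : IsPQSegD S p q) {s t : ℕ × ℕ} (hs : s ∈ S) (ht : t ∈ S)
    (h : s.1 = t.1) : s = t :=
  (hS.2.2.1 s.1 (hS.2.1 s hs).1 (hS.2.1 s hs).2).unique ⟨hs, rfl⟩ ⟨ht, h.symm⟩

lemma eq_ancestor (hS : IsPQSegD S p q) {s t : ℕ × ℕ} (hs : s ∈ S) (ht : t ∈ S)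
    (hts : t.1 ≤ s.1) : t = (t.1, s.2 / 2 ^ (s.1 - t.1)) := by
  rcases hS.2.2.2 t ht s hs with h | h
  · exact Prod.ext rfl h.2.symm
  · obtain rfl := hS.eq_of_fst_eq hs ht (le_antisymm h.1 hts)
    simp

lemma root_mem (hS : IsPQSegD S 0 q) : ((0, 0) : ℕ × ℕ) ∈ S := by
  obtain ⟨t, ht, ht0⟩ := hS.exists_mem_fst_eq le_rfl (Nat.zero_le q)
  have ht1 : t.2 < 2 ^ t.1 := hS.1 t ht
  rw [ht0, pow_zero, Nat.lt_one_iff] at ht1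
  obtain rfl : t = (0, 0) := Prod.ext ht0 ht1
  exact ht

lemma sum_eq_sum_range (hS : IsPQSegD S 0 q) {s : ℕ × ℕ} (hs : s ∈ S) (f : ℕ × ℕ → ℝ)
    (hf : ∀ t ∈ S, s.1 < t.1 → f t = 0) :
    ∑ t ∈ S, f t = ∑ k ∈ range (s.1 + 1), f (k, s.2 / 2 ^ (s.1 - k)) := by
  have hpath : ∀ k ∈ range (s.1 + 1), (k, s.2 / 2 ^ (s.1 - k)) ∈ S := by
    intro k hk
    have hks : k ≤ s.1 := mem_range_succ_iff.1 hk
    obtain ⟨t, ht, rfl⟩ := hS.exists_mem_fst_eq (Nat.zero_le k) (hks.trans (hS.2.1 s hs).2)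
    rwa [← hS.eq_ancestor hs ht hks]
  rw [← sum_image fun k _ l _ h => (Prod.mk.inj h).1]
  refine (sum_subset (image_subset_iff.2 hpath) fun t ht hnot => hf t ht ?_).symm
  by_contra! hts
  exact hnot (mem_image.2 ⟨t.1, mem_range_succ_iff.2 hts, (hS.eq_ancestor hs ht hts).symm⟩)

end IsPQSegD

lemma AdmissibleD.eq_singleton_of_root_mem {F : Finset (Finset (ℕ × ℕ))} (hF : AdmissibleD F)
    {S : Finset (ℕ × ℕ)} (hS : S ∈ F) (hroot : ((0, 0) : ℕ × ℕ) ∈ S) :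
    F = {S} ∧ ∃ q, IsPQSegD S 0 q := by
  obtain ⟨p, q, -, hseg, hdisj⟩ := hF
  obtain rfl : p = 0 := Nat.le_zero.1 ((hseg S hS).2.1 _ hroot).1
  refine ⟨eq_singleton_iff_unique_mem.2 ⟨hS, fun S' hS' => ?_⟩, q, hseg S hS⟩
  by_contra hne
  exact disjoint_left.1 (hdisj S' hS' S hS hne) (hseg S' hS').root_mem hroot

lemma admissibleD_rootEdge : AdmissibleD {{(0, 0), (1, 0)}} := by
  refine ⟨0, 1, zero_le_one, ?_, by simp⟩
  simp only [mem_singleton, forall_eq]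
  refine ⟨by decide, by decide, fun k _ hk => ?_, by simp [dLe]⟩
  interval_cases k
  · exact ⟨(0, 0), by simp, by simp +contextual⟩
  · exact ⟨(1, 0), by simp, by simp +contextual⟩

lemma sum_sum_abs_le_of_pairwiseDisjoint {ι : Type*} {F : Finset (Finset ι)}
    (hF : (F : Set (Finset ι)).PairwiseDisjoint id) (g : ι → ℝ) {E : Finset ι}
    (hE : ∀ S ∈ F, ∀ t ∈ S, g t ≠ 0 → t ∈ E) :
    ∑ S ∈ F, ∑ t ∈ S, |g t| ≤ ∑ t ∈ E, |g t| := by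
  classical
  calc ∑ S ∈ F, ∑ t ∈ S, |g t| = ∑ t ∈ F.biUnion id with |g t| ≠ 0, |g t| := by
        rw [sum_filter_ne_zero, sum_biUnion hF]; rfl
    _ ≤ ∑ t ∈ E, |g t| :=
        sum_le_sum_of_subset_of_nonneg (fun t ht => ?_) fun _ _ _ => abs_nonneg _
  obtain ⟨htF, hgt⟩ := mem_filter.1 ht
  obtain ⟨S, hS, htS⟩ := mem_biUnion.1 htF
  exact hE S hS t htS (abs_ne_zero.1 hgt)

lemma bddAbove_jhNorm_set (z : (ℕ × ℕ) →₀ ℝ) :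
    BddAbove {r : ℝ | ∃ F : Finset (Finset (ℕ × ℕ)), AdmissibleD F ∧
      r = ∑ S ∈ F, |∑ t ∈ S, z t|} := by
  refine ⟨∑ t ∈ z.support, |z t|, ?_⟩
  rintro r ⟨F, ⟨p, q, -, -, hdisj⟩, rfl⟩
  calc ∑ S ∈ F, |∑ t ∈ S, z t| ≤ ∑ S ∈ F, ∑ t ∈ S, |z t| :=
        sum_le_sum fun S _ => abs_sum_le_sum_abs _ _
    _ ≤ ∑ t ∈ z.support, |z t| := sum_sum_abs_le_of_pairwiseDisjoint (fun S hS S' hS' hne =>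
        hdisj S hS S' hS' hne) z fun _ _ _ _ hz => Finsupp.mem_support_iff.2 hz

lemma le_jhNorm {F : Finset (Finset (ℕ × ℕ))} (hF : AdmissibleD F) (z : (ℕ × ℕ) →₀ ℝ) :
    ∑ S ∈ F, |∑ t ∈ S, z t| ≤ jhNorm z :=
  le_csSup (bddAbove_jhNorm_set z) ⟨F, hF, rfl⟩

lemma jhNorm_le {z : (ℕ × ℕ) →₀ ℝ} {C : ℝ}
    (h : ∀ F : Finset (Finset (ℕ × ℕ)), AdmissibleD F → ∑ S ∈ F, |∑ t ∈ S, z t| ≤ C) :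
    jhNorm z ≤ C :=
  csSup_le ⟨0, ∅, ⟨0, 0, le_rfl, by simp, by simp⟩, by simp⟩ fun _ ⟨F, hF, hr⟩ => hr ▸ h F hF

lemma jhNorm_neg (z : (ℕ × ℕ) →₀ ℝ) : jhNorm (-z) = jhNorm z := by
  simp only [jhNorm, Finsupp.coe_neg, Pi.neg_apply, sum_neg_distrib, abs_neg]

lemma abs_add_le_jhNorm (z : (ℕ × ℕ) →₀ ℝ) : |z (0, 0) + z (1, 0)| ≤ jhNorm z := by
  simpa using le_jhNorm admissibleD_rootEdge z

-- The paper's witness with `ε = 1/8`.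
noncomputable def witness : (ℕ × ℕ) →₀ ℝ :=
  fun₀
    | (0, 0) => 7 / 8
    | (1, 0) => 1 / 8
    | (1, 1) => -1 / 8
    | (2, 0) => -1 / 8
    | (2, 1) => -1 / 8
    | (2, 2) => -1 / 8
    | (2, 3) => 1 / 8

def witnessNodes : Finset (ℕ × ℕ) := {(0, 0), (1, 0), (1, 1), (2, 0), (2, 1), (2, 2), (2, 3)}

lemma witness_support_subset : witness.support ⊆ witnessNodes := by
  intro t ht
  by_contra hnot
  simp only [witnessNodes, mem_insert, mem_singleton, not_or] at hnot
  simp_all [witness, Finsupp.update_apply]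

lemma witness_mem_supported : witness ∈ Finsupp.supported ℝ ℝ {t : ℕ × ℕ | t.2 < 2 ^ t.1} := by
  intro t ht
  have := witness_support_subset ht
  simp only [witnessNodes, mem_insert, mem_singleton] at this
  rcases this with rfl | rfl | rfl | rfl | rfl | rfl | rfl <;> decide

lemma abs_witness_path_sum_le {m b : ℕ} (hm : m ≤ 2) (hb : b < 2 ^ m)
    (hmb : (m, b) ≠ (1, 0)) : |∑ k ∈ range (m + 1), witness (k, b / 2 ^ (m - k))| ≤ 7 / 8 := by
  interval_cases m <;> interval_cases b <;>
    first | exact absurd rfl hmb | norm_num [sum_range_succ, witness]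

lemma sum_abs_witness_erase_root : ∑ t ∈ witnessNodes.erase (0, 0), |witness t| = 3 / 4 := by
  norm_num [witnessNodes, witness]

lemma witness_eq_zero_of_two_lt {t : ℕ × ℕ} (ht : 2 < t.1) : witness t = 0 := by
  refine Finsupp.notMem_support_iff.1 fun h => ?_
  have := witness_support_subset h
  simp only [witnessNodes, mem_insert, mem_singleton] at this
  rcases this with rfl | rfl | rfl | rfl | rfl | rfl | rfl <;> simp at ht

lemma IsPQSegD.sum_witness_eq_one_or_abs_le {S : Finset (ℕ × ℕ)} {q : ℕ}
    (hS : IsPQSegD S 0 q) (z : ℕ × ℕ → ℝ) :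
    (∑ t ∈ S, witness t = 1 ∧ ∑ t ∈ S, z t = z (0, 0) + z (1, 0)) ∨
      |∑ t ∈ S, witness t| ≤ 7 / 8 := by
  obtain ⟨s, hs, hsm⟩ := hS.exists_mem_fst_eq (Nat.zero_le (min q 2)) (min_le_left q 2)
  have hsq : ∀ t ∈ S, t.1 ≤ q := fun t ht => (hS.2.1 t ht).2
  rw [hS.sum_eq_sum_range hs witness fun t ht hst =>
    witness_eq_zero_of_two_lt (by have := hsq t ht; omega)]
  by_cases hs10 : s = (1, 0)
  · subst hs10
    have hq : q = 1 := by simp only at hsm; omega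
    rw [hS.sum_eq_sum_range hs z fun t ht hst => absurd (hsq t ht) (by omega)]
    left
    norm_num [sum_range_succ, witness]
  · exact Or.inr (abs_witness_path_sum_le (hsm ▸ min_le_right q 2) (hS.1 s hs) hs10)

lemma sum_sum_abs_witness_le_of_root_notMem {F : Finset (Finset (ℕ × ℕ))} (hF : AdmissibleD F)
    (hroot : ∀ S ∈ F, ((0, 0) : ℕ × ℕ) ∉ S) : ∑ S ∈ F, ∑ t ∈ S, |witness t| ≤ 3 / 4 := by
  obtain ⟨p, q, -, -, hdisj⟩ := hF
  rw [← sum_abs_witness_erase_root]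
  exact sum_sum_abs_le_of_pairwiseDisjoint (fun S hS S' hS' hne => hdisj S hS S' hS' hne) witness
    fun S hS t ht hwt => mem_erase.2 ⟨ne_of_mem_of_not_mem ht (hroot S hS),
      witness_support_subset (Finsupp.mem_support_iff.2 hwt)⟩

lemma sum_abs_sum_witness_add_le {F : Finset (Finset (ℕ × ℕ))} (hF : AdmissibleD F)
    (z : (ℕ × ℕ) →₀ ℝ) :
    ∑ S ∈ F, |∑ t ∈ S, (witness + z) t| ≤
      max (1 + (z (0, 0) + z (1, 0))) (7 / 8 + ∑ S ∈ F, |∑ t ∈ S, z t|) := by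
  simp only [Finsupp.coe_add, Pi.add_apply, sum_add_distrib]
  by_cases hroot : ∃ S ∈ F, ((0, 0) : ℕ × ℕ) ∈ S
  · obtain ⟨S, hS, hrootS⟩ := hroot
    obtain ⟨rfl, q, hSeg⟩ := hF.eq_singleton_of_root_mem hS hrootS
    rw [sum_singleton, sum_singleton]
    rcases hSeg.sum_witness_eq_one_or_abs_le z with ⟨hx, hz⟩ | hx
    · rw [hx, hz]
      set a := z (0, 0) + z (1, 0)
      exact abs_le.2 ⟨by linarith [le_max_right (1 + a) (7 / 8 + |a|), neg_abs_le a],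
        le_max_left _ _⟩
    · exact le_max_of_le_right ((abs_add_le _ _).trans (by linarith))
  · push Not at hroot
    have hoff := sum_sum_abs_witness_le_of_root_notMem hF hroot
    refine le_max_of_le_right ?_
    calc ∑ S ∈ F, |∑ t ∈ S, witness t + ∑ t ∈ S, z t|
        ≤ ∑ S ∈ F, (∑ t ∈ S, |witness t| + |∑ t ∈ S, z t|) :=
          sum_le_sum fun S _ => (abs_add_le _ _).trans
            (add_le_add_left (abs_sum_le_sum_abs _ _) _)
      _ ≤ 7 / 8 + ∑ S ∈ F, |∑ t ∈ S, z t| := by rw [sum_add_distrib]; linarith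

lemma jhNorm_witness_add_le_of_jhNorm_le {z : (ℕ × ℕ) →₀ ℝ} (hz : jhNorm z ≤ 1 / 16) :
    jhNorm (witness + z) ≤ 1 + (z (0, 0) + z (1, 0)) :=
  jhNorm_le fun F hF => (sum_abs_sum_witness_add_le hF z).trans <| max_le le_rfl <| by
    linarith [le_jhNorm hF z, neg_abs_le (z (0, 0) + z (1, 0)), abs_add_le_jhNorm z]

lemma jhNorm_witness_add_add_jhNorm_witness_sub_le {z : (ℕ × ℕ) →₀ ℝ}
    (hz : jhNorm z ≤ 1 / 16) : jhNorm (witness + z) + jhNorm (witness - z) ≤ 2 := by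
  have hplus := jhNorm_witness_add_le_of_jhNorm_le hz
  have hminus := jhNorm_witness_add_le_of_jhNorm_le (z := -z) (by rwa [jhNorm_neg])
  simp only [← sub_eq_add_neg, Finsupp.coe_neg, Pi.neg_apply] at hminus
  linarith

lemma jhNorm_witness : jhNorm witness = 1 := by
  refine le_antisymm ?_ ?_
  · simpa using jhNorm_witness_add_le_of_jhNorm_le (z := 0) (jhNorm_le fun F _ => by simp)
  · calc (1 : ℝ) = |witness (0, 0) + witness (1, 0)| := by norm_num [witness]
      _ ≤ jhNorm witness := abs_add_le_jhNorm witness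

theorem stmt7_general (X : Type*) [NormedAddCommGroup X] [NormedSpace ℝ X]
    (e : ℕ × ℕ → X)
    (hnorm : ∀ x : (ℕ × ℕ) →₀ ℝ, (∀ t ∈ x.support, t.2 < 2 ^ t.1) →
      ‖∑ t ∈ x.support, x t • e t‖ = jhNorm x)
    (hdense : Dense (Submodule.span ℝ (e '' {t : ℕ × ℕ | t.2 < 2 ^ t.1}) : Set X)) :
    ∃ x : X, ‖x‖ = 1 ∧
      sInf {d : ℝ | ∃ α : ℝ, 0 < α ∧
        d = Metric.diam {f : X →L[ℝ] ℝ | ‖f‖ ≤ 1 ∧ f x > 1 - α}} = 0 := by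
  set T := Finsupp.linearCombination ℝ e
  have hT : ∀ c ∈ Finsupp.supported ℝ ℝ {t : ℕ × ℕ | t.2 < 2 ^ t.1}, ‖T c‖ = jhNorm c :=
    fun c hc => by
      rw [Finsupp.linearCombination_apply, Finsupp.sum]
      exact hnorm c fun t ht => hc ht
  refine ⟨T witness, by rw [hT _ witness_mem_supported, jhNorm_witness], ?_⟩
  refine sInf_diam_weakStarSlice_eq_zero (δ := 1 / 16) (by norm_num)
    (norm_add_add_norm_sub_le_two_of_dense hdense (by norm_num) fun u hu hδ => ?_)
  obtain ⟨c, hc, rfl⟩ := (Finsupp.mem_span_image_iff_linearCombination ℝ).1 hu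
  rw [hT c hc] at hδ
  rw [← map_add, ← map_sub, hT _ (add_mem witness_mem_supported hc),
    hT _ (sub_mem witness_mem_supported hc)]
  exact jhNorm_witness_add_add_jhNorm_witness_sub_le hδ.le

/-- There exists `x` in the unit sphere of `JH` such that the infimum over
`α > 0` of the diameters of the w*-slices `S(B_{JH*}, x, α)` is `0`; in particular the unit
ball of `JH*` has w*-slices of arbitrarily small diameter. -/
theorem stmt7 (X : Type*) [NormedAddCommGroup X] [NormedSpace ℝ X] [CompleteSpace X]
    (e : ℕ × ℕ → X)
    (hnorm : ∀ x : (ℕ × ℕ) →₀ ℝ, (∀ t ∈ x.support, t.2 < 2 ^ t.1) →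
      ‖∑ t ∈ x.support, x t • e t‖ = jhNorm x)
    (hdense : Dense (Submodule.span ℝ (e '' {t : ℕ × ℕ | t.2 < 2 ^ t.1}) : Set X)) :
    ∃ x : X, ‖x‖ = 1 ∧
      sInf {d : ℝ | ∃ α : ℝ, 0 < α ∧
        d = Metric.diam {f : X →L[ℝ] ℝ | ‖f‖ ≤ 1 ∧ f x > 1 - α}} = 0 :=
  stmt7_general X e hnorm hdense
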